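/- arXiv:1302.0001 — 3 statements merged into one kernel-verified Lean document; each statement's English description precedes it below -/
import Mathlib

section
/- Let A be a complex Banach algebra and let τ : A × A × A → ℂ be a continuous trilinear form which is a 3-cyclic cocycle, i.e. τ(a,b,c) = τ(b,c,a) for all a,b,c ∈ A and τ(ab,c,d) − τ(a,bc,d) + τ(a,b,cd) − τ(da,b,c) = 0 for all a,b,c,d ∈ A. If E : ℝ → A is a differentiable curve such that E(t)² = E(t) for every t ∈ ℝ, then the function t ↦ τ(E(t),E(t),E(t)) is constant on ℝ. -/
/-!
Differentiating `E² = E` gives `Ė = Ė E + E Ė`, hence `E Ė E = 0`. Two instances of the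
cocycle identity then show `τ (Ė, E, E) = 0`, and by cyclicity the derivative
`τ (Ė, E, E) + τ (E, Ė, E) + τ (E, E, Ė)` of `t ↦ τ (E, E, E)` is three times this.
-/

theorem IsIdempotentElem.mul_mul_eq_zero_of_eq_mul_add_mul {R : Type*} [NonUnitalRing R]
    {p q : R} (hp : IsIdempotentElem p) (hq : q = q * p + p * q) : p * q * p = 0 := by
  have h : p * q * p = p * q * p + p * q * p :=
    calc p * q * p = p * (q * p + p * q) * p := by rw [← hq]
      _ = p * q * (p * p) + p * p * q * p := by simp only [mul_add, add_mul, mul_assoc]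
      _ = p * q * p + p * q * p := by rw [hp.eq]
  exact left_eq_add.mp h

theorem IsIdempotentElem.eq_deriv_mul_add_mul_deriv {𝕜 A : Type*} [NontriviallyNormedField 𝕜]
    [NormedRing A] [NormedAlgebra 𝕜 A] {E : 𝕜 → A} {Q : A} {t : 𝕜} (hE : HasDerivAt E Q t)
    (hidem : ∀ s, IsIdempotentElem (E s)) : Q = Q * E t + E t * Q :=
  ((hE.mul hE).unique (by rwa [show E * E = E from funext fun s => (hidem s).eq])).symm

theorem apply_eq_zero_of_cocycle_of_eq_mul_add_mul {𝕜 A F : Type*} [NontriviallyNormedField 𝕜]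
    [NormedRing A] [NormedAlgebra 𝕜 A] [NormedAddCommGroup F] [NormedSpace 𝕜 F]
    (τ : A →L[𝕜] A →L[𝕜] A →L[𝕜] F)
    (hcocycle : ∀ a b c d : A,
      τ (a * b) c d - τ a (b * c) d + τ a b (c * d) - τ (d * a) b c = 0)
    {p q : A} (hp : IsIdempotentElem p) (hq : q = q * p + p * q) : τ q p p = 0 := by
  have hpqp := hp.mul_mul_eq_zero_of_eq_mul_add_mul hq
  have hqp : τ (q * p) p p = τ (p * q) p p := by
    have := hcocycle q p p p
    rwa [hp.eq, sub_add_cancel, sub_eq_zero] at this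
  have hpq : τ (p * q) p p = 0 := by
    have := hcocycle p (p * q) p p
    rwa [← mul_assoc, hp.eq, hpqp, map_zero, zero_apply, sub_zero, add_sub_cancel_right] at this
  rw [hq, map_add, add_apply, add_apply, hqp, hpq, add_zero]

theorem HasDerivAt.trilinear_apply_self {𝕜 𝕜' A F : Type*} [NontriviallyNormedField 𝕜]
    [NontriviallyNormedField 𝕜'] [NormedAlgebra 𝕜 𝕜'] [NormedAddCommGroup A] [NormedSpace 𝕜' A]
    [NormedSpace 𝕜 A] [IsScalarTower 𝕜 𝕜' A] [NormedAddCommGroup F] [NormedSpace 𝕜' F]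
    [NormedSpace 𝕜 F] [IsScalarTower 𝕜 𝕜' F] (τ : A →L[𝕜'] A →L[𝕜'] A →L[𝕜'] F)
    {E : 𝕜 → A} {Q : A} {t : 𝕜} (hE : HasDerivAt E Q t) :
    HasDerivAt (fun s => τ (E s) (E s) (E s))
      (τ Q (E t) (E t) + τ (E t) Q (E t) + τ (E t) (E t) Q) t := by
  have hid := hasFDerivAt_id (𝕜 := 𝕜') (E t)
  have hdiag := (τ.hasFDerivAt.clm_apply hid).clm_apply hid
  refine ((hdiag.restrictScalars 𝕜).comp_hasDerivAt t hE).congr_deriv ?_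
  simp only [ContinuousLinearMap.coe_restrictScalars', add_apply,
    ContinuousLinearMap.coe_comp, Function.comp_apply, ContinuousLinearMap.id_apply,
    ContinuousLinearMap.flip_apply, id]
  abel

theorem cyclic_cocycle_constant_on_differentiable_idempotent_curve_general
    {A : Type*} [NormedRing A] [NormedAlgebra ℂ A]
    (τ : A →L[ℂ] A →L[ℂ] A →L[ℂ] ℂ)
    (hcyc : ∀ a b c : A, τ a b c = τ b c a)
    (hcocycle : ∀ a b c d : A,
      τ (a * b) c d - τ a (b * c) d + τ a b (c * d) - τ (d * a) b c = 0)
    (E : ℝ → A) (hE : Differentiable ℝ E)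
    (hidem : ∀ t : ℝ, E t * E t = E t) :
    ∀ s t : ℝ, τ (E s) (E s) (E s) = τ (E t) (E t) (E t) := by
  have hderiv : ∀ t, HasDerivAt (fun s => τ (E s) (E s) (E s)) 0 t := by
    intro t
    have hE' := (hE t).hasDerivAt
    have hvanish := apply_eq_zero_of_cocycle_of_eq_mul_add_mul τ hcocycle (hidem t)
      (IsIdempotentElem.eq_deriv_mul_add_mul_deriv hE' hidem)
    have hsum := hE'.trilinear_apply_self τ
    rwa [hcyc (E t) (E t), hcyc (E t) (deriv E t), hvanish, add_zero, add_zero] at hsum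
  exact is_const_of_deriv_eq_zero (fun t => (hderiv t).differentiableAt)
    (fun t => (hderiv t).deriv)

/-- If `τ` is a continuous 3-cyclic cocycle on a complex Banach algebra `A` and `E : ℝ → A`
is a differentiable curve of idempotents, then `t ↦ τ (E t) (E t) (E t)` is constant. -/
theorem cyclic_cocycle_constant_on_differentiable_idempotent_curve
    {A : Type*} [NormedRing A] [NormedAlgebra ℂ A] [CompleteSpace A]
    (τ : A →L[ℂ] A →L[ℂ] A →L[ℂ] ℂ)
    (hcyc : ∀ a b c : A, τ a b c = τ b c a)
    (hcocycle : ∀ a b c d : A,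
      τ (a * b) c d - τ a (b * c) d + τ a b (c * d) - τ (d * a) b c = 0)
    (E : ℝ → A) (hE : Differentiable ℝ E)
    (hidem : ∀ t : ℝ, E t * E t = E t) :
    ∀ s t : ℝ, τ (E s) (E s) (E s) = τ (E t) (E t) (E t) :=
  cyclic_cocycle_constant_on_differentiable_idempotent_curve_general τ hcyc hcocycle E hE hidem
end

section
/- Let P, Q : ℝ² → ℝ be continuous, and let γ₁, …, γₙ : ℝ → ℝ² be differentiable periodic solutions of the system x' = P(x,y), y' = Q(x,y) (each γᵢ satisfies γᵢ'(t) = (P(γᵢ(t)), Q(γᵢ(t))) and has some period Tᵢ > 0). Let f : ℝ² → ℝ be a function that separates the orbits: f(u) ≠ f(v) whenever u lies on the orbit of γᵢ, v lies on the orbit of γⱼ, and i ≠ j. Suppose λ₀, …, λ_{n−1} ∈ ℝ and g : ℝ² → ℝ is a differentiable function such that P(z)·∂g/∂x(z) + Q(z)·∂g/∂y(z) = Σ_{k=0}^{n−1} λₖ·f(z)^k for all z ∈ ℝ². Then λ₀ = λ₁ = ⋯ = λ_{n−1} = 0. -/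
/-!
Along a periodic solution `γ` of `x' = P, y' = Q`, the function `g ∘ γ` is periodic with
derivative `D(g) ∘ γ`, so by Rolle's theorem `D(g)` vanishes somewhere on the orbit. If
`D(g) = Σ λₖ fᵏ`, the polynomial `Σ λₖ Xᵏ` of degree `< n` then vanishes at the `n` values `f`
takes at these points, which are distinct because `f` separates the orbits; by the Vandermonde
determinant all `λₖ` vanish.
-/

theorem Function.Periodic.exists_hasDerivAt_eq_zero {h h' : ℝ → ℝ} {T : ℝ}
    (hh : Function.Periodic h T) (hT : 0 < T) (hd : ∀ t, HasDerivAt h (h' t) t) :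
    ∃ t, h' t = 0 := by
  have hends : h 0 = h T := by simpa using (hh 0).symm
  obtain ⟨c, -, hc⟩ := _root_.exists_hasDerivAt_eq_zero hT
    (fun t _ => (hd t).continuousAt.continuousWithinAt) hends (fun t _ => hd t)
  exact ⟨c, hc⟩

theorem LinearMapClass.map_prod_eq {R M F : Type*} [Semiring R] [AddCommMonoid M] [Module R M]
    [FunLike F (R × R) M] [LinearMapClass F R (R × R) M] (L : F) (a b : R) :
    L (a, b) = a • L (1, 0) + b • L (0, 1) := by
  have hab : ((a, b) : R × R) = a • ((1 : R), (0 : R)) + b • ((0 : R), (1 : R)) := by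
    simp
  rw [hab, map_add, map_smul, map_smul]

theorem DifferentiableAt.hasDerivAt_comp_of_hasDerivAt_prod {g : ℝ × ℝ → ℝ} {γ : ℝ → ℝ × ℝ}
    {a b t : ℝ} (hg : DifferentiableAt ℝ g (γ t)) (hγ : HasDerivAt γ (a, b) t) :
    HasDerivAt (fun s => g (γ s))
      (a * fderiv ℝ g (γ t) (1, 0) + b * fderiv ℝ g (γ t) (0, 1)) t := by
  have hcomp := hg.hasFDerivAt.comp_hasDerivAt t hγ
  rwa [LinearMapClass.map_prod_eq, smul_eq_mul, smul_eq_mul] at hcomp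

theorem exists_directionalDeriv_eq_zero_of_periodic_solution {P Q g : ℝ × ℝ → ℝ}
    {γ : ℝ → ℝ × ℝ} {T : ℝ} (hsol : ∀ t, HasDerivAt γ (P (γ t), Q (γ t)) t)
    (hT : 0 < T) (hper : Function.Periodic γ T) (hg : ∀ t, DifferentiableAt ℝ g (γ t)) :
    ∃ t, P (γ t) * fderiv ℝ g (γ t) (1, 0) + Q (γ t) * fderiv ℝ g (γ t) (0, 1) = 0 :=
  (hper.comp g).exists_hasDerivAt_eq_zero hT
    fun t => (hg t).hasDerivAt_comp_of_hasDerivAt_prod (hsol t)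

theorem coefficients_vanish_of_directional_derivative_eq_poly_of_separating_general
    (n : ℕ) (P Q : ℝ × ℝ → ℝ)
    (γ : Fin n → ℝ → ℝ × ℝ)
    (hsol : ∀ i, ∀ t : ℝ, HasDerivAt (γ i) (P (γ i t), Q (γ i t)) t)
    (T : Fin n → ℝ) (hT : ∀ i, 0 < T i)
    (hper : ∀ i, ∀ t : ℝ, γ i (t + T i) = γ i t)
    (f : ℝ × ℝ → ℝ)
    (hsep : ∀ i j, i ≠ j → ∀ s t : ℝ, f (γ i s) ≠ f (γ j t))
    (lam : Fin n → ℝ) (g : ℝ × ℝ → ℝ) (hg : Differentiable ℝ g)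
    (heq : ∀ z : ℝ × ℝ,
      P z * fderiv ℝ g z (1, 0) + Q z * fderiv ℝ g z (0, 1) =
        ∑ k : Fin n, lam k * f z ^ (k : ℕ)) :
    ∀ k : Fin n, lam k = 0 := by
  have hroot : ∀ i, ∃ t, ∑ k : Fin n, lam k * f (γ i t) ^ (k : ℕ) = 0 := fun i => by
    simpa only [heq] using exists_directionalDeriv_eq_zero_of_periodic_solution (hsol i) (hT i)
      (hper i) fun t => hg (γ i t)
  choose τ hτ using hroot
  have hinj : Function.Injective fun i => f (γ i (τ i)) := fun i j hij => by
    by_contra hne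
    exact hsep i j hne (τ i) (τ j) hij
  exact congrFun (Matrix.eq_zero_of_forall_index_sum_mul_pow_eq_zero hinj hτ)

/-- If `γ₁, …, γₙ` are periodic solutions of `x' = P(x,y)`, `y' = Q(x,y)`, `f` separates
their orbits, and `D(g) = P·g_x + Q·g_y` equals `Σ λₖ fᵏ` for a differentiable `g`,
then all the `λₖ` vanish. -/
theorem coefficients_vanish_of_directional_derivative_eq_poly_of_separating
    (n : ℕ) (P Q : ℝ × ℝ → ℝ) (hP : Continuous P) (hQ : Continuous Q)
    (γ : Fin n → ℝ → ℝ × ℝ)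
    (hsol : ∀ i, ∀ t : ℝ, HasDerivAt (γ i) (P (γ i t), Q (γ i t)) t)
    (T : Fin n → ℝ) (hT : ∀ i, 0 < T i)
    (hper : ∀ i, ∀ t : ℝ, γ i (t + T i) = γ i t)
    (f : ℝ × ℝ → ℝ)
    (hsep : ∀ i j, i ≠ j → ∀ s t : ℝ, f (γ i s) ≠ f (γ j t))
    (lam : Fin n → ℝ) (g : ℝ × ℝ → ℝ) (hg : Differentiable ℝ g)
    (heq : ∀ z : ℝ × ℝ,
      P z * fderiv ℝ g z (1, 0) + Q z * fderiv ℝ g z (0, 1) =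
        ∑ k : Fin n, lam k * f z ^ (k : ℕ)) :
    ∀ k : Fin n, lam k = 0 :=
  coefficients_vanish_of_directional_derivative_eq_poly_of_separating_general n P Q γ hsol T hT hper
    f hsep lam g hg heq
end

section
/- Let P, Q : ℝ² → ℝ be smooth, let D be the linear operator on the real vector space C^∞(ℝ², ℝ) of smooth real-valued functions defined by D(g) = P·g_x + Q·g_y, and let γ₁, …, γₙ : ℝ → ℝ² be differentiable periodic solutions of x' = P(x,y), y' = Q(x,y) with pairwise disjoint orbits. Suppose f ∈ C^∞(ℝ², ℝ) separates the orbits: f(u) ≠ f(v) whenever u and v lie on the orbits of γᵢ and γⱼ with i ≠ j. Then the images of the n functions 1, f, f², …, f^{n−1} in the quotient vector space C^∞(ℝ², ℝ) / range(D) are linearly independent; in particular the codimension of the range of D is at least n. -/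
open MeasureTheory intervalIntegral Polynomial

/-- A continuous function on a nondegenerate interval with zero integral has a zero. -/
lemma exists_zero_of_intervalIntegral_eq_zero {φ : ℝ → ℝ} {T : ℝ} (hT : 0 < T)
    (hc : Continuous φ) (h : ∫ t in (0:ℝ)..T, φ t = 0) :
    ∃ t ∈ Set.Icc (0:ℝ) T, φ t = 0 := by
  by_contra hno
  push_neg at hno
  have hI : IntervalIntegrable φ volume 0 T := hc.intervalIntegrable 0 T
  by_cases hpos : ∀ t ∈ Set.Icc (0:ℝ) T, 0 < φ t
  · have := intervalIntegral_pos_of_pos_on hI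
      (fun x hx => hpos x ⟨hx.1.le, hx.2.le⟩) hT
    linarith
  · by_cases hneg : ∀ t ∈ Set.Icc (0:ℝ) T, φ t < 0
    · have hpos' := intervalIntegral_pos_of_pos_on hI.neg
        (fun x hx => by simpa using (hneg x ⟨hx.1.le, hx.2.le⟩)) hT
      simp only [Pi.neg_apply] at hpos'
      rw [intervalIntegral.integral_neg, h] at hpos'
      simp at hpos'
    · push_neg at hpos hneg
      obtain ⟨s, hs, hφs⟩ := hpos
      obtain ⟨t, ht, hφt⟩ := hneg
      have hφs' : φ s < 0 := lt_of_le_of_ne hφs (hno s hs)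
      have hφt' : 0 < φ t := lt_of_le_of_ne hφt (Ne.symm (hno t ht))
      have h0 : (0:ℝ) ∈ Set.uIcc (φ s) (φ t) := by
        rw [Set.mem_uIcc]; left; exact ⟨hφs'.le, hφt'.le⟩
      obtain ⟨x, hx, hφx⟩ := intermediate_value_uIcc (hc.continuousOn) h0
      exact hno x (Set.uIcc_subset_Icc hs ht hx) hφx

/-- The subalgebra of `C^∞` real-valued functions on the plane. -/
def smoothFunctions : Subalgebra ℝ ((ℝ × ℝ) → ℝ) where
  carrier := {g | ContDiff ℝ (⊤ : ℕ∞) g}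
  mul_mem' := fun hf hg => by
    simp only [Set.mem_setOf_eq] at *; exact hf.mul hg
  add_mem' := fun hf hg => by
    simp only [Set.mem_setOf_eq] at *; exact hf.add hg
  one_mem' := by
    simp only [Set.mem_setOf_eq]; exact contDiff_const
  zero_mem' := by
    simp only [Set.mem_setOf_eq]; exact contDiff_const
  algebraMap_mem' := fun _ => by
    simp only [Set.mem_setOf_eq]; exact contDiff_const

/-- If the planar system `x' = P(x,y)`, `y' = Q(x,y)` has `n` periodic solutions whose orbits
are separated by a smooth function `f`, then the images of `1, f, …, f^{n−1}` in the quotient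
of `C^∞(ℝ²,ℝ)` by the range of the operator `D(g) = P·g_x + Q·g_y` are linearly independent;
in particular the codimension of the range of `D` is at least `n`. -/
theorem powers_of_separating_function_linearIndependent_in_quotient_by_range
    (n : ℕ) (P Q : (ℝ × ℝ) → ℝ) (hP : ContDiff ℝ (⊤ : ℕ∞) P) (hQ : ContDiff ℝ (⊤ : ℕ∞) Q)
    (D : smoothFunctions →ₗ[ℝ] smoothFunctions)
    (hD : ∀ g : smoothFunctions, ∀ z : ℝ × ℝ,
      (D g : (ℝ × ℝ) → ℝ) z =
        P z * fderiv ℝ (g : (ℝ × ℝ) → ℝ) z (1, 0) +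
        Q z * fderiv ℝ (g : (ℝ × ℝ) → ℝ) z (0, 1))
    (γ : Fin n → ℝ → ℝ × ℝ)
    (hsol : ∀ i, ∀ t : ℝ, HasDerivAt (γ i) (P (γ i t), Q (γ i t)) t)
    (T : Fin n → ℝ) (hT : ∀ i, 0 < T i)
    (hper : ∀ i, ∀ t : ℝ, γ i (t + T i) = γ i t)
    (hdisjoint : ∀ i j, i ≠ j → ∀ s t : ℝ, γ i s ≠ γ j t)
    (f : smoothFunctions)
    (hsep : ∀ i j, i ≠ j → ∀ s t : ℝ, (f : (ℝ × ℝ) → ℝ) (γ i s) ≠ (f : (ℝ × ℝ) → ℝ) (γ j t)) :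
    LinearIndependent ℝ
      (fun k : Fin n =>
        (Submodule.Quotient.mk (f ^ (k : ℕ)) :
          smoothFunctions ⧸ LinearMap.range D)) ∧
    (n : Cardinal) ≤ Module.rank ℝ (smoothFunctions ⧸ LinearMap.range D) := by
  classical
  have hγc : ∀ i, Continuous (γ i) :=
    fun i => Differentiable.continuous (fun t => (hsol i t).differentiableAt)
  have hsm : ∀ g : smoothFunctions, ContDiff ℝ (⊤ : ℕ∞) (g : (ℝ × ℝ) → ℝ) := fun g => g.2
  have hgc : ∀ g : smoothFunctions, Continuous (g : (ℝ × ℝ) → ℝ) :=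
    fun g => (hsm g).continuous
  have hint : ∀ (g : smoothFunctions) (i : Fin n),
      IntervalIntegrable (fun t => (g : (ℝ × ℝ) → ℝ) (γ i t)) volume 0 (T i) :=
    fun g i => ((hgc g).comp (hγc i)).intervalIntegrable 0 (T i)
  -- The integration functionals along the periodic orbits.
  let L : smoothFunctions →ₗ[ℝ] (Fin n → ℝ) :=
  { toFun := fun g i => ∫ t in (0:ℝ)..T i, (g : (ℝ × ℝ) → ℝ) (γ i t)
    map_add' := fun g h => by
      funext i
      have hco : (↑(g + h) : (ℝ × ℝ) → ℝ) = fun z => (g : (ℝ × ℝ) → ℝ) z + (h : (ℝ × ℝ) → ℝ) z := rfl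
      simp only [hco, Pi.add_apply]
      exact intervalIntegral.integral_add (hint g i) (hint h i)
    map_smul' := fun c g => by
      funext i
      have hco : (↑(c • g) : (ℝ × ℝ) → ℝ) = fun z => c * (g : (ℝ × ℝ) → ℝ) z := rfl
      simp only [hco, RingHom.id_apply, Pi.smul_apply, smul_eq_mul]
      exact intervalIntegral.integral_const_mul c _ }
  -- Chain rule: along an orbit, `(g ∘ γ i)' = (D g) ∘ γ i`.
  have hchain : ∀ (g : smoothFunctions) (i : Fin n) (t : ℝ),
      HasDerivAt (fun t => (g : (ℝ × ℝ) → ℝ) (γ i t)) ((D g : (ℝ × ℝ) → ℝ) (γ i t)) t := by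
    intro g i t
    have hdg : HasFDerivAt (g : (ℝ × ℝ) → ℝ)
        (fderiv ℝ (g : (ℝ × ℝ) → ℝ) (γ i t)) (γ i t) :=
      ((hsm g).differentiable (by simp) (γ i t)).hasFDerivAt
    have hcomp := hdg.comp_hasDerivAt t (hsol i t)
    refine hcomp.congr_deriv (Eq.symm ?_)
    rw [hD g (γ i t)]
    have hxy : (P (γ i t), Q (γ i t)) =
        P (γ i t) • ((1:ℝ), (0:ℝ)) + Q (γ i t) • ((0:ℝ), (1:ℝ)) := by
      simp [Prod.ext_iff]
    rw [hxy, map_add, ContinuousLinearMap.map_smul, ContinuousLinearMap.map_smul]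
    simp [smul_eq_mul]
  -- The functionals vanish on the range of `D`.
  have hLD : ∀ g : smoothFunctions, L (D g) = 0 := by
    intro g
    funext i
    show (∫ t in (0:ℝ)..T i, (D g : (ℝ × ℝ) → ℝ) (γ i t)) = 0
    rw [intervalIntegral.integral_eq_sub_of_hasDerivAt
      (f := fun t => (g : (ℝ × ℝ) → ℝ) (γ i t)) (fun t _ => hchain g i t) (hint (D g) i)]
    have hpt := hper i 0
    rw [zero_add] at hpt
    rw [hpt, sub_self]
  -- Main computation of linear independence.
  have key : ∀ c : Fin n → ℝ,
      (∑ k, c k • (Submodule.Quotient.mk (f ^ (k : ℕ)) :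
        smoothFunctions ⧸ LinearMap.range D)) = 0 → ∀ k, c k = 0 := by
    intro c hc k
    have hmem : (∑ k, c k • f ^ (k : ℕ)) ∈ LinearMap.range D := by
      have hmk : ((LinearMap.range D).mkQ) (∑ k, c k • f ^ (k : ℕ)) = 0 := by
        rw [map_sum]
        simp only [_root_.map_smul, Submodule.mkQ_apply]
        exact hc
      rwa [Submodule.mkQ_apply, Submodule.Quotient.mk_eq_zero] at hmk
    obtain ⟨g, hg⟩ := hmem
    have hL0 : L (∑ k, c k • f ^ (k : ℕ)) = 0 := by rw [← hg]; exact hLD g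
    rw [map_sum] at hL0
    simp only [_root_.map_smul] at hL0
    -- the moments of `f` along each orbit vanish
    have hLsum : ∀ i : Fin n,
        (∑ j : Fin n, c j * ∫ t in (0:ℝ)..T i, ((f : (ℝ × ℝ) → ℝ) (γ i t)) ^ (j : ℕ)) = 0 := by
      intro i
      have h1 := congrFun hL0 i
      rw [Pi.zero_apply] at h1
      have h2 : ∀ j : Fin n, (L (f ^ (j : ℕ))) i =
          ∫ t in (0:ℝ)..T i, ((f : (ℝ × ℝ) → ℝ) (γ i t)) ^ (j : ℕ) := by
        intro j
        show (∫ t in (0:ℝ)..T i, ((f ^ (j : ℕ) : smoothFunctions) : (ℝ × ℝ) → ℝ) (γ i t)) = _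
        congr 1
      calc (∑ j : Fin n, c j * ∫ t in (0:ℝ)..T i, ((f : (ℝ × ℝ) → ℝ) (γ i t)) ^ (j : ℕ))
          = ∑ j : Fin n, c j * (L (f ^ (j : ℕ))) i := by
            refine Finset.sum_congr rfl fun j _ => by rw [h2 j]
        _ = (∑ j : Fin n, c j • L (f ^ (j : ℕ))) i := by
            simp [Finset.sum_apply]
        _ = 0 := h1
    -- the polynomial with coefficients `c`
    set p : Polynomial ℝ := ∑ j : Fin n, Polynomial.C (c j) * Polynomial.X ^ (j : ℕ) with hp
    have hpev : ∀ x : ℝ, p.eval x = ∑ j : Fin n, c j * x ^ (j : ℕ) := by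
      intro x
      rw [hp, Polynomial.eval_finset_sum]
      simp
    -- `p` vanishes somewhere on each orbit
    have hroot : ∀ i : Fin n, ∃ t ∈ Set.Icc (0:ℝ) (T i),
        p.eval ((f : (ℝ × ℝ) → ℝ) (γ i t)) = 0 := by
      intro i
      apply exists_zero_of_intervalIntegral_eq_zero (hT i)
        (p.continuous.comp ((hgc f).comp (hγc i)))
      have hintpow : ∀ j : Fin n, IntervalIntegrable
          (fun t => ((f : (ℝ × ℝ) → ℝ) (γ i t)) ^ (j : ℕ)) volume 0 (T i) :=
        fun j => (((hgc f).comp (hγc i)).pow _).intervalIntegrable 0 (T i)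
      calc (∫ t in (0:ℝ)..T i, p.eval ((f : (ℝ × ℝ) → ℝ) (γ i t)))
          = ∫ t in (0:ℝ)..T i, ∑ j : Fin n, c j * ((f : (ℝ × ℝ) → ℝ) (γ i t)) ^ (j : ℕ) := by
            refine intervalIntegral.integral_congr fun t _ => hpev _
        _ = ∑ j : Fin n, ∫ t in (0:ℝ)..T i, c j * ((f : (ℝ × ℝ) → ℝ) (γ i t)) ^ (j : ℕ) :=
            intervalIntegral.integral_finset_sum (fun j _ => (hintpow j).const_mul (c j))
        _ = ∑ j : Fin n, c j * ∫ t in (0:ℝ)..T i, ((f : (ℝ × ℝ) → ℝ) (γ i t)) ^ (j : ℕ) := by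
            refine Finset.sum_congr rfl fun j _ => intervalIntegral.integral_const_mul _ _
        _ = 0 := hLsum i
    choose τ hτ hpr using hroot
    have hrinj : Function.Injective (fun i => (f : (ℝ × ℝ) → ℝ) (γ i (τ i))) := by
      intro i j hij
      by_contra hne
      exact hsep i j hne (τ i) (τ j) hij
    have hdeg : p.natDegree < n := by
      have h1 : p.natDegree ≤ n - 1 := by
        apply Polynomial.natDegree_sum_le_of_forall_le
        intro j _
        refine le_trans (Polynomial.natDegree_C_mul_le _ _) ?_
        rw [Polynomial.natDegree_X_pow]
        have := j.isLt
        omega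
      have hn : 0 < n := k.pos
      omega
    have hp0 : p = 0 :=
      p.eq_zero_of_natDegree_lt_card_of_eval_eq_zero hrinj (fun i => hpr i)
        (by simpa using hdeg)
    have hcoeff : p.coeff (k : ℕ) = c k := by
      rw [hp, Polynomial.finset_sum_coeff]
      rw [Finset.sum_eq_single k]
      · simp
      · intro j _ hj
        simp [Polynomial.coeff_C_mul, Polynomial.coeff_X_pow, Fin.val_eq_val, Ne.symm hj]
      · simp
    rw [← hcoeff, hp0, Polynomial.coeff_zero]
  have hli : LinearIndependent ℝ
      (fun k : Fin n =>
        (Submodule.Quotient.mk (f ^ (k : ℕ)) :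
          smoothFunctions ⧸ LinearMap.range D)) :=
    Fintype.linearIndependent_iff.mpr key
  refine ⟨hli, ?_⟩
  simpa using hli.cardinal_le_rank
end
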